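/- Let 𝒞 be a Gromov–Hausdorff compact set of isometry classes of compact geodesically complete CAT(1) spaces of diameter π, let k ∈ ℕ, and let Σ_l be a sequence in 𝒞. Then the following are equivalent: (1) every GH-accumulation point Σ of (Σ_l) is isometric to a k-fold spherical suspension S^{k-1} * Σ' (with Σ' possibly empty); (2) for every δ > 0, for all sufficiently large l the space Σ_l admits a δ-spherical k-tuple. -/

import Mathlib

open Metric Set Filter GromovHausdorff Topology

/-- `v` and `v̄` are opposite `δ`-spherical points. -/
def OppPts {S : Type*} [MetricSpace S] (δ : ℝ) (v vb : S) : Prop :=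
  ∀ w : S, dist v w + dist w vb < Real.pi + δ

/-- `(v_i)` and `(v̄_i)` are opposite `δ`-spherical `k`-tuples. -/
def OppTuples {S : Type*} [MetricSpace S] {k : ℕ} (δ : ℝ) (v vb : Fin k → S) : Prop :=
  (∀ i, OppPts δ (v i) (vb i)) ∧
    ∀ i j, i ≠ j →
      dist (v i) (vb j) < Real.pi / 2 + δ ∧
      dist (v i) (v j) < Real.pi / 2 + δ ∧
      dist (vb i) (vb j) < Real.pi / 2 + δ

/-- CAT(1) comparison. -/
def CAT1 (S : Type*) [MetricSpace S] : Prop :=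
  (∀ a b : S, dist a b < Real.pi →
    ∃ m : S, dist a m = dist a b / 2 ∧ dist m b = dist a b / 2) ∧
  ∀ a b c m : S, dist a b + dist b c + dist c a < 2 * Real.pi →
    dist a m = dist a b / 2 → dist m b = dist a b / 2 →
    (Real.cos (dist c a) + Real.cos (dist c b)) / 2 ≤
      Real.cos (dist c m) * Real.cos (dist a b / 2)

/-- A compact geodesically complete CAT(1) space of diameter `π` is isometric to a
`k`-fold spherical suspension `S^{k-1} * Σ'` iff it contains a spherical `k`-tuple:
`k` points with pairwise distances `π/2`, each having a unique antipode. -/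
def SplitsAsSuspension (S : Type*) [MetricSpace S] (k : ℕ) : Prop :=
  ∃ v : Fin k → S, (∀ i, ∃! w : S, dist (v i) w = Real.pi) ∧
    ∀ i j, i ≠ j → dist (v i) (v j) = Real.pi / 2

lemma oppTuples_transfer {k : ℕ} {X Y : GHSpace} {δ ε : ℝ} (hε : 0 < ε)
    (hd : dist X Y < ε) (h : ∃ v vb : Fin k → X.Rep, OppTuples δ v vb) :
    ∃ v' vb' : Fin k → Y.Rep, OppTuples (δ + 4 * ε) v' vb' := by
  obtain ⟨v, vb, hOpp, hpair⟩ := h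
  set Φ := optimalGHInjl X.Rep Y.Rep with hΦ
  set Ψ := optimalGHInjr X.Rep Y.Rep with hΨ
  have hΦi : Isometry Φ := isometry_optimalGHInjl X.Rep Y.Rep
  have hΨi : Isometry Ψ := isometry_optimalGHInjr X.Rep Y.Rep
  have hH : hausdorffDist (range Φ) (range Ψ) < ε := by
    rw [hausdorffDist_optimal, ← dist_ghDist]; exact hd
  have hfin : EMetric.hausdorffEdist (range Φ) (range Ψ) ≠ ⊤ :=
    hausdorffEdist_ne_top_of_nonempty_of_bounded (range_nonempty _) (range_nonempty _)
      (isCompact_univ.isBounded.subset (subset_univ _))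
      (isCompact_univ.isBounded.subset (subset_univ _))
  have hpick : ∀ x : X.Rep, ∃ y : Y.Rep, dist (Φ x) (Ψ y) < ε := by
    intro x
    obtain ⟨z, hz, hzd⟩ := exists_dist_lt_of_hausdorffDist_lt (mem_range_self x) hH hfin
    obtain ⟨y, rfl⟩ := hz
    exact ⟨y, hzd⟩
  have hpick' : ∀ w' : Y.Rep, ∃ x : X.Rep, dist (Φ x) (Ψ w') < ε := by
    intro w'
    obtain ⟨z, hz, hzd⟩ := exists_dist_lt_of_hausdorffDist_lt' (mem_range_self w') hH hfin
    obtain ⟨x, rfl⟩ := hz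
    exact ⟨x, hzd⟩
  choose v' hv' using fun i => hpick (v i)
  choose vb' hvb' using fun i => hpick (vb i)
  refine ⟨v', vb', ?_, ?_⟩
  · intro i w'
    obtain ⟨x, hx⟩ := hpick' w'
    have h1 : dist (v' i) w' ≤ ε + dist (v i) x + ε := by
      have := dist_triangle4 (Ψ (v' i)) (Φ (v i)) (Φ x) (Ψ w')
      rw [hΨi.dist_eq, hΦi.dist_eq] at this
      have e1 : dist (Ψ (v' i)) (Φ (v i)) < ε := by rw [dist_comm]; exact hv' i
      linarith [hx]
    have h2 : dist w' (vb' i) ≤ ε + dist x (vb i) + ε := by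
      have := dist_triangle4 (Ψ w') (Φ x) (Φ (vb i)) (Ψ (vb' i))
      rw [hΨi.dist_eq, hΦi.dist_eq] at this
      have e1 : dist (Ψ w') (Φ x) < ε := by rw [dist_comm]; exact hx
      linarith [hvb' i]
    have := hOpp i x
    linarith
  · intro i j hij
    have key : ∀ a b : X.Rep, ∀ a' b' : Y.Rep, dist (Φ a) (Ψ a') < ε →
        dist (Φ b) (Ψ b') < ε → dist a b < Real.pi / 2 + δ →
        dist a' b' < Real.pi / 2 + (δ + 4 * ε) := by
      intro a b a' b' ha hb hab
      have := dist_triangle4 (Ψ a') (Φ a) (Φ b) (Ψ b')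
      rw [hΨi.dist_eq, hΦi.dist_eq] at this
      have e1 : dist (Ψ a') (Φ a) < ε := by rw [dist_comm]; exact ha
      linarith
    exact ⟨key _ _ _ _ (hv' i) (hvb' j) (hpair i j hij).1,
      key _ _ _ _ (hv' i) (hv' j) (hpair i j hij).2.1,
      key _ _ _ _ (hvb' i) (hvb' j) (hpair i j hij).2.2⟩

lemma splits_of_forall_delta {S : Type*} [MetricSpace S] [CompactSpace S] (k : ℕ)
    (h3 : ∀ v w : S, ∃ a : S, dist v a = Real.pi ∧ dist w a = Real.pi - dist v w)
    (ht : ∀ δ : ℝ, 0 < δ → ∃ v vb : Fin k → S, OppTuples δ v vb) :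
    SplitsAsSuspension S k := by
  have hδpos : ∀ n : ℕ, (0:ℝ) < 1 / (n + 1) := fun n => by positivity
  choose V VB hVVB using fun n : ℕ => ht (1 / (n + 1 : ℝ)) (hδpos n)
  obtain ⟨⟨v, vb⟩, φ, hφ, hlim⟩ :=
    CompactSpace.tendsto_subseq (X := (Fin k → S) × (Fin k → S)) (fun n => (V n, VB n))
  -- componentwise limits of distances
  have hδlim : Tendsto (fun n : ℕ => 1 / ((φ n : ℝ) + 1)) atTop (𝓝 0) :=
    tendsto_one_div_add_atTop_nhds_zero_nat.comp hφ.tendsto_atTop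
  have hdlim : ∀ (g : (Fin k → S) × (Fin k → S) → ℝ), Continuous g →
      Tendsto (fun n => g (V (φ n), VB (φ n))) atTop (𝓝 (g (v, vb))) := by
    intro g hg
    exact (hg.tendsto _).comp hlim
  -- ∀ w bound
  have hA : ∀ i (w : S), dist (v i) w + dist w (vb i) ≤ Real.pi := by
    intro i w
    have hcont : Continuous fun p : (Fin k → S) × (Fin k → S) =>
        dist (p.1 i) w + dist w (p.2 i) := by fun_prop
    have h1 := hdlim _ hcont
    have h2 : Tendsto (fun n : ℕ => Real.pi + 1 / ((φ n : ℝ) + 1)) atTop (𝓝 Real.pi) := by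
      simpa using (tendsto_const_nhds (x := Real.pi)).add hδlim
    refine le_of_tendsto_of_tendsto' h1 h2 fun n => ?_
    exact le_of_lt ((hVVB (φ n)).1 i w)
  -- lower bound on d(V n i, VB n i)
  have hlow : ∀ (n : ℕ) (i : Fin k), Real.pi - 1 / ((n:ℝ) + 1) ≤ dist (V n i) (VB n i) := by
    intro n i
    obtain ⟨a, ha, -⟩ := h3 (V n i) (V n i)
    have h1 := (hVVB n).1 i a
    rw [ha] at h1
    have h2 := dist_triangle (V n i) (VB n i) a
    rw [ha] at h2
    have h4 : dist (VB n i) a = dist a (VB n i) := dist_comm _ _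
    linarith
  have hanti : ∀ i, dist (v i) (vb i) = Real.pi := by
    intro i
    have hcont : Continuous fun p : (Fin k → S) × (Fin k → S) =>
        dist (p.1 i) (p.2 i) := by fun_prop
    have h1 := hdlim _ hcont
    have h2 : Tendsto (fun n : ℕ => Real.pi - 1 / ((φ n : ℝ) + 1)) atTop (𝓝 Real.pi) := by
      simpa using (tendsto_const_nhds (x := Real.pi)).sub hδlim
    have hge : Real.pi ≤ dist (v i) (vb i) :=
      le_of_tendsto_of_tendsto' h2 h1 fun n => hlow (φ n) i
    have hle := hA i (v i)
    simp only [dist_self, zero_add] at hle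
    linarith
  refine ⟨v, fun i => ⟨vb i, hanti i, fun a ha => ?_⟩, fun i j hij => ?_⟩
  · have := hA i a
    rw [ha] at this
    have h0 : dist a (vb i) ≤ 0 := by linarith
    exact dist_le_zero.mp h0
  · -- upper bound
    have hcont : Continuous fun p : (Fin k → S) × (Fin k → S) =>
        dist (p.1 i) (p.1 j) := by fun_prop
    have h1 := hdlim _ hcont
    have h2 : Tendsto (fun n : ℕ => Real.pi / 2 + 1 / ((φ n : ℝ) + 1)) atTop (𝓝 (Real.pi / 2)) := by
      simpa using (tendsto_const_nhds (x := Real.pi / 2)).add hδlim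
    have hle : dist (v i) (v j) ≤ Real.pi / 2 :=
      le_of_tendsto_of_tendsto' h1 h2 fun n => le_of_lt ((hVVB (φ n)).2 i j hij).2.1
    -- lower bound
    have hlow2 : ∀ n : ℕ, Real.pi / 2 - 2 * (1 / ((n:ℝ) + 1)) ≤ dist (V n i) (V n j) := by
      intro n
      have l1 := hlow n j
      have l2 := dist_triangle (V n j) (V n i) (VB n j)
      have l3 := ((hVVB n).2 i j hij).1
      have l4 : dist (V n j) (V n i) = dist (V n i) (V n j) := dist_comm _ _
      linarith
    have h3' : Tendsto (fun n : ℕ => Real.pi / 2 - 2 * (1 / ((φ n : ℝ) + 1))) atTop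
        (𝓝 (Real.pi / 2)) := by
      have := ((tendsto_const_nhds (x := Real.pi / 2)).sub (hδlim.const_mul 2))
      simpa using this
    have hge : Real.pi / 2 ≤ dist (v i) (v j) :=
      le_of_tendsto_of_tendsto' h3' h1 fun n => hlow2 (φ n)
    linarith

lemma tuples_of_splits {S : Type*} [MetricSpace S] {k : ℕ}
    (h3 : ∀ v w : S, ∃ a : S, dist v a = Real.pi ∧ dist w a = Real.pi - dist v w)
    (hs : SplitsAsSuspension S k) {δ : ℝ} (hδ : 0 < δ) :
    ∃ v vb : Fin k → S, OppTuples δ v vb := by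
  obtain ⟨v, hanti, hpair⟩ := hs
  choose vb hvb1 hvb2 using fun i => h3 (v i) (v i)
  have hkey : ∀ i (w : S), dist w (vb i) = Real.pi - dist (v i) w := by
    intro i w
    obtain ⟨a, ha1, ha2⟩ := h3 (v i) w
    have : a = vb i := by
      obtain ⟨u, -, hu⟩ := hanti i
      rw [hu a ha1, hu (vb i) (hvb1 i)]
    rwa [this] at ha2
  refine ⟨v, vb, fun i w => ?_, fun i j hij => ?_⟩
  · rw [hkey i w]; linarith
  · have e1 : dist (v i) (vb j) = Real.pi / 2 := by
      rw [hkey j (v i), hpair j i (Ne.symm hij)]; ring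
    have e2 : dist (vb i) (vb j) = Real.pi / 2 := by
      rw [dist_comm, hkey i (vb j), e1]; ring
    rw [e1, e2, hpair i j hij]
    exact ⟨by linarith, by linarith, by linarith⟩

/-- For a sequence in a GH-compact family `𝒞` of compact geodesically complete CAT(1)
spaces of diameter `π`, every GH-accumulation point is a `k`-fold spherical suspension
iff eventually the spaces admit `δ`-spherical `k`-tuples for every `δ > 0`. -/
theorem stmt15 (𝒞 : Set GHSpace) (h𝒞comp : IsCompact 𝒞)
    (h𝒞 : ∀ A ∈ 𝒞, Metric.diam (Set.univ : Set A.Rep) = Real.pi ∧ CAT1 A.Rep ∧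
      ∀ v w : A.Rep, ∃ a : A.Rep, dist v a = Real.pi ∧ dist w a = Real.pi - dist v w)
    (k : ℕ) (f : ℕ → GHSpace) (hf : ∀ l, f l ∈ 𝒞) :
    (∀ A : GHSpace, MapClusterPt A atTop f → SplitsAsSuspension A.Rep k) ↔
      (∀ δ : ℝ, 0 < δ → ∀ᶠ l in atTop,
        ∃ v vb : Fin k → (f l).Rep, OppTuples δ v vb) := by
  constructor
  · intro hL δ hδ
    by_contra hcon
    rw [not_eventually] at hcon
    have hne : (atTop ⊓ 𝓟 {l | ¬∃ v vb : Fin k → (f l).Rep, OppTuples δ v vb}).NeBot :=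
      frequently_iff_neBot.mp hcon
    set F := atTop ⊓ 𝓟 {l | ¬∃ v vb : Fin k → (f l).Rep, OppTuples δ v vb} with hF
    have hmap : map f F ≤ 𝓟 𝒞 := le_principal_iff.mpr (mem_map.mpr (univ_mem' fun l => hf l))
    obtain ⟨A, hA𝒞, hAcl⟩ := h𝒞comp.exists_clusterPt hmap
    have hmcp : MapClusterPt A atTop f :=
      hAcl.mono (map_mono inf_le_left)
    have htuple := tuples_of_splits (h𝒞 A hA𝒞).2.2 (hL A hmcp) (half_pos hδ)
    have hfreq : ∃ᶠ l in F, f l ∈ Metric.ball A (δ / 8) :=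
      mapClusterPt_iff_frequently.mp hAcl _ (Metric.ball_mem_nhds _ (by linarith))
    obtain ⟨l, hlS, hld⟩ := (frequently_inf_principal.mp hfreq).exists
    have hdist : dist A (f l) < δ / 8 := by
      rw [dist_comm]; exact mem_ball.mp hld
    have := oppTuples_transfer (k := k) (by linarith : (0:ℝ) < δ / 8) hdist htuple
    rw [show δ / 2 + 4 * (δ / 8) = δ by ring] at this
    exact hlS this
  · intro hR A hmcp
    have hA𝒞 : A ∈ 𝒞 := by
      have : ClusterPt A (𝓟 𝒞) :=
        hmcp.clusterPt.mono (le_principal_iff.mpr (mem_map.mpr (univ_mem' fun l => hf l)))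
      exact h𝒞comp.isClosed.closure_eq ▸ mem_closure_iff_clusterPt.mpr this
    apply splits_of_forall_delta k (h𝒞 A hA𝒞).2.2
    intro δ hδ
    have h5 : (0:ℝ) < δ / 5 := by linarith
    have h1 := hR (δ / 5) h5
    have h2 : ∃ᶠ l in atTop, f l ∈ Metric.ball A (δ / 5) :=
      mapClusterPt_iff_frequently.mp hmcp _ (Metric.ball_mem_nhds _ h5)
    obtain ⟨l, hld, hPl⟩ := (h2.and_eventually h1).exists
    have hdist : dist (f l) A < δ / 5 := mem_ball.mp hld
    have := oppTuples_transfer (k := k) h5 hdist hPl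
    rwa [show δ / 5 + 4 * (δ / 5) = δ by ring] at this
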